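/- Let V be a finite-dimensional real vector space with a symplectic form η, and let 𝒥 denote the set of complex structures J on V (J² = -Id) such that η(·, J·) is a positive-definite inner product. The tangent space to 𝒥 at J can be identified with endomorphisms j of V satisfying jJ + Jj = 0 and j + j* = 0 (where j* is the η-adjoint). Then for any nonzero vector v ∈ V and any J ∈ 𝒥, the evaluation map sending j to j(v) is surjective onto V. -/

import Mathlib

/-!
The maps `x ↦ η(a, x) b + η(b, x) a` are `η`-skew, and since `J` is `η`-skew as well,
`f ↦ f + J f J` turns `η`-skew maps into `η`-skew maps anticommuting with `J`. For `a = J v` the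
resulting map sends `v` to `L b = -c b + η(b, v) J v - η(b, J v) v`, where `c = η(v, J v) ≠ 0`.
Now `L` is `-c` on the `η`-orthogonal of the plane spanned by `v` and `J v` and `-2c` on that
plane, so `L b = u` can be solved explicitly.
-/

namespace LinearMap

section CommRing

variable {R M : Type*} [CommRing R] [AddCommGroup M] [Module R M]

/-- The element of `sp(M, η)` corresponding to the symmetric product `a · b`. -/
def symmEnd (η : M →ₗ[R] M →ₗ[R] R) (a b : M) : Module.End R M :=
  (η a).smulRight b + (η b).smulRight a

/-- Twice the `J`-antilinear part of `f`. -/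
def antilinearPart (J f : Module.End R M) : Module.End R M :=
  f + J ∘ₗ f ∘ₗ J

variable {η : M →ₗ[R] M →ₗ[R] R} {J : Module.End R M}

@[simp]
theorem symmEnd_apply (a b x : M) : symmEnd η a b x = η a x • b + η b x • a := rfl

@[simp]
theorem antilinearPart_apply (f : Module.End R M) (x : M) :
    antilinearPart J f x = f x + J (f (J x)) := rfl

theorem isSkewAdjoint_iff {f : Module.End R M} :
    η.IsSkewAdjoint f ↔ ∀ x y, η (f x) y = -η x (f y) := by
  simp only [IsSkewAdjoint, IsAdjointPair, Pi.neg_apply, map_neg]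

theorem apply_apply_of_comp_self_eq_neg_id (hJ : J ∘ₗ J = -id) (x : M) : J (J x) = -x :=
  congr($hJ x)

theorem antilinearPart_comp_add_comp_antilinearPart (hJ : J ∘ₗ J = -id) (f : Module.End R M) :
    antilinearPart J f ∘ₗ J + J ∘ₗ antilinearPart J f = 0 := by
  ext x
  simp [apply_apply_of_comp_self_eq_neg_id hJ]

theorem IsAlt.isSkewAdjoint_symmEnd (hη : η.IsAlt) (a b : M) :
    η.IsSkewAdjoint (symmEnd η a b) := by
  intro x y
  simp only [symmEnd_apply, Pi.neg_apply, map_add, map_smul, add_apply, smul_apply,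
    smul_eq_mul, map_neg, ← hη.neg b x, ← hη.neg a x]
  ring

theorem IsAlt.isSkewAdjoint_of_apply_apply_comm (hη : η.IsAlt)
    (hJ : ∀ x y, η x (J y) = η y (J x)) : η.IsSkewAdjoint J := by
  intro x y
  rw [Pi.neg_apply, map_neg, ← hJ y x, hη.neg]

theorem IsSkewAdjoint.antilinearPart {f : Module.End R M} (hJ : η.IsSkewAdjoint J)
    (hf : η.IsSkewAdjoint f) : η.IsSkewAdjoint (antilinearPart J f) := by
  rw [isSkewAdjoint_iff] at *
  intro x y
  simp only [antilinearPart_apply, map_add, add_apply, hf, hJ, neg_neg, neg_add_rev]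
  abel

theorem antilinearPart_symmEnd_apply (hη : η.IsAlt) (hJ : J ∘ₗ J = -id) (v b : M) :
    antilinearPart J (symmEnd η (J v) b) v =
      -η v (J v) • b + η b v • J v - η b (J v) • v := by
  simp only [antilinearPart_apply, symmEnd_apply, hη.self_eq_zero, zero_smul, zero_add, map_smul,
    apply_apply_of_comp_self_eq_neg_id hJ, smul_neg, ← hη.neg (J v) v, neg_neg]
  abel

end CommRing

theorem exists_antilinearPart_symmEnd_apply_eq {K M : Type*} [Field K] [NeZero (2 : K)]
    [AddCommGroup M] [Module K M] {η : M →ₗ[K] M →ₗ[K] K} {J : Module.End K M}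
    (hη : η.IsAlt) (hJ : J ∘ₗ J = -id) {v : M} (hv : η v (J v) ≠ 0) (u : M) :
    ∃ b, antilinearPart J (symmEnd η (J v) b) v = u := by
  have hJv : η (J v) v = -η v (J v) := by rw [← hη.neg (J v) v, neg_neg]
  refine ⟨-(η v (J v))⁻¹ • (u - (η u (J v) / (2 * η v (J v))) • v
    + (η u v / (2 * η v (J v))) • J v), ?_⟩
  rw [antilinearPart_symmEnd_apply hη hJ]
  simp only [map_add, map_sub, map_smul, add_apply, sub_apply, smul_apply,
    smul_eq_mul, hη.self_eq_zero, hJv]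
  match_scalars <;> field_simp <;> ring

end LinearMap

theorem biinvariant_diagonal_stmt0_general
    {V : Type*} [AddCommGroup V] [Module ℝ V]
    (η : V →ₗ[ℝ] V →ₗ[ℝ] ℝ)
    (halt : ∀ v : V, η v v = 0)
    (J : V →ₗ[ℝ] V)
    (hJ : J ∘ₗ J = -LinearMap.id)
    (hcompat : ∀ v w : V, η v (J w) = η w (J v))
    (hpos : ∀ v : V, v ≠ 0 → 0 < η v (J v))
    (v : V) (hv : v ≠ 0) (u : V) :
    ∃ j : V →ₗ[ℝ] V,
      j ∘ₗ J + J ∘ₗ j = 0 ∧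
      (∀ x y : V, η (j x) y = - η x (j y)) ∧
      j v = u := by
  have hη : η.IsAlt := halt
  obtain ⟨b, hb⟩ := LinearMap.exists_antilinearPart_symmEnd_apply_eq hη hJ (hpos v hv).ne' u
  have hskew : η.IsSkewAdjoint (LinearMap.antilinearPart J (LinearMap.symmEnd η (J v) b)) :=
    (hη.isSkewAdjoint_of_apply_apply_comm hcompat).antilinearPart (hη.isSkewAdjoint_symmEnd _ _)
  exact ⟨_, LinearMap.antilinearPart_comp_add_comp_antilinearPart hJ _,
    LinearMap.isSkewAdjoint_iff.mp hskew, hb⟩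

/-- For a symplectic form η on a finite-dimensional real vector
space V and a compatible complex structure J, the evaluation map at any
nonzero vector v, from the tangent space of the space of compatible complex
structures at J (endomorphisms j with jJ + Jj = 0 and j η-skew-adjoint),
onto V is surjective. -/
theorem biinvariant_diagonal_stmt0
    {V : Type*} [AddCommGroup V] [Module ℝ V] [FiniteDimensional ℝ V]
    (η : V →ₗ[ℝ] V →ₗ[ℝ] ℝ)
    (halt : ∀ v : V, η v v = 0)
    (hnd : ∀ v : V, (∀ w : V, η v w = 0) → v = 0)
    (J : V →ₗ[ℝ] V)
    (hJ : J ∘ₗ J = -LinearMap.id)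
    (hcompat : ∀ v w : V, η v (J w) = η w (J v))
    (hpos : ∀ v : V, v ≠ 0 → 0 < η v (J v))
    (v : V) (hv : v ≠ 0) (u : V) :
    ∃ j : V →ₗ[ℝ] V,
      j ∘ₗ J + J ∘ₗ j = 0 ∧
      (∀ x y : V, η (j x) y = - η x (j y)) ∧
      j v = u :=
  biinvariant_diagonal_stmt0_general η halt J hJ hcompat hpos v hv u
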